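/- arXiv:2406.04750 — 5 statements merged into one kernel-verified Lean document; each statement's English description precedes it below -/
import Mathlib

section
/- Let K ≥ 1 and α ≥ 0, and for x ∈ ℝ^K with x_i > 0 for all i define H_α(x) = (∑_{j=1}^K x_j e^{-α x_j}) / (∑_{i=1}^K e^{-α x_i}). Then H_α is concave on the convex set D = {x ∈ ℝ^K : x_i > 0 and α x_i ≤ 1 for all i}; that is, for all x, y ∈ D and all t ∈ [0,1], H_α(t·x + (1−t)·y) ≥ t·H_α(x) + (1−t)·H_α(y). -/
/-!
Along a segment `s ↦ z(s) = y + s • u`, write `E` for the average under the Gibbs weights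
`e^{-α z_j(s)}`. Differentiating the weights gives `(E c)' = E c' - α Cov(u, c)`, so
`H_α(z(s)) = E z` has first derivative `E u - α Cov(u, z)` and second derivative
`-α E[(u - E u)² (2 - α (z - E z))]`. If `0 ≤ z_j` and `α z_j ≤ 2`, the last factor is at least
`α E z ≥ 0`, so `H_α` is concave along every segment of that convex set.
-/

open Finset Real

variable {ι : Type*}

theorem convex_setOf_nonneg_mul_le (α c : ℝ) :
    Convex ℝ {x : ι → ℝ | ∀ i, 0 ≤ x i ∧ α * x i ≤ c} := by
  intro x hx y hy a b ha hb hab i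
  obtain ⟨hx0, hxc⟩ := hx i
  obtain ⟨hy0, hyc⟩ := hy i
  simp only [Pi.add_apply, Pi.smul_apply, smul_eq_mul]
  constructor
  · positivity
  · have hc : a * c + b * c = c := by rw [← add_mul, hab, one_mul]
    linarith [mul_le_mul_of_nonneg_left hxc ha, mul_le_mul_of_nonneg_left hyc hb]

variable [Fintype ι]

/-- The Gibbs average of `c` at energies `z`; `H_α(x)` is `gibbsAvg α x x`. -/
noncomputable def gibbsAvg (α : ℝ) (z c : ι → ℝ) : ℝ :=
  (∑ j, c j * exp (-α * z j)) / ∑ j, exp (-α * z j)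

noncomputable def gibbsCov (α : ℝ) (z a b : ι → ℝ) : ℝ :=
  gibbsAvg α z (a * b) - gibbsAvg α z a * gibbsAvg α z b

theorem sum_exp_neg_mul_pos [Nonempty ι] (α : ℝ) (z : ι → ℝ) : 0 < ∑ j, exp (-α * z j) :=
  sum_pos (fun _ _ => exp_pos _) univ_nonempty

theorem gibbsAvg_eq_sum_mul (α : ℝ) (z c : ι → ℝ) :
    gibbsAvg α z c = ∑ j, c j * (exp (-α * z j) / ∑ i, exp (-α * z i)) := by
  simp only [gibbsAvg, sum_div, mul_div_assoc]

theorem gibbsAvg_nonneg (α : ℝ) (z : ι → ℝ) {c : ι → ℝ} (hc : ∀ j, 0 ≤ c j) :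
    0 ≤ gibbsAvg α z c :=
  div_nonneg (sum_nonneg fun j _ => mul_nonneg (hc j) (exp_pos _).le)
    (sum_nonneg fun _ _ => (exp_pos _).le)

theorem gibbsAvg_zero (α : ℝ) (z : ι → ℝ) : gibbsAvg α z 0 = 0 := by
  simp [gibbsAvg]

theorem sum_sub_sq_mul_two_sub_eq (p u v : ι → ℝ) (a b β : ℝ) :
    ∑ j, (u j - a) ^ 2 * (2 - β * (v j - b)) * p j
      = (2 + β * b) * ∑ j, u j * u j * p j - β * ∑ j, u j * (u j * v j) * p j
        - 2 * a * (2 + β * b) * ∑ j, u j * p j + 2 * β * a * ∑ j, u j * v j * p j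
        + a ^ 2 * (2 + β * b) * ∑ j, p j - β * a ^ 2 * ∑ j, v j * p j := by
  simp only [mul_sum, ← sum_add_distrib, ← sum_sub_distrib]
  exact sum_congr rfl fun j _ => by ring

theorem gibbsAvg_sub_sq_mul_two_sub_eq [Nonempty ι] (α β : ℝ) (z u v : ι → ℝ) :
    gibbsAvg α z (fun j => (u j - gibbsAvg α z u) ^ 2 * (2 - β * (v j - gibbsAvg α z v)))
      = 2 * gibbsCov α z u u - β * (gibbsCov α z u (u * v) - gibbsCov α z u u * gibbsAvg α z v
          - gibbsAvg α z u * gibbsCov α z u v) := by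
  have hp : ∑ j, exp (-α * z j) / ∑ i, exp (-α * z i) = 1 := by
    rw [← sum_div, div_self (sum_exp_neg_mul_pos α z).ne']
  simp only [gibbsCov, gibbsAvg_eq_sum_mul, Pi.mul_apply]
  rw [sum_sub_sq_mul_two_sub_eq, hp]
  ring

theorem hasDerivAt_gibbsAvg_line [Nonempty ι] (α : ℝ) (y u : ι → ℝ) {c : ℝ → ι → ℝ}
    {c' : ι → ℝ} {s : ℝ} (hc : ∀ j, HasDerivAt (fun s => c s j) (c' j) s) :
    HasDerivAt (fun s => gibbsAvg α (y + s • u) (c s))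
      (gibbsAvg α (y + s • u) c' - α * gibbsCov α (y + s • u) u (c s)) s := by
  have hw : ∀ j, HasDerivAt (fun s => exp (-α * (y + s • u) j))
      (-α * u j * exp (-α * (y + s • u) j)) s := fun j => by
    have := (((hasDerivAt_id s).mul_const (u j)).const_add (y j)).const_mul (-α) |>.exp
    convert this using 1 <;> simp; ring
  have hN := HasDerivAt.fun_sum fun j (_ : j ∈ univ) => (hc j).fun_mul (hw j)
  have hS := HasDerivAt.fun_sum fun j (_ : j ∈ univ) => hw j
  have hS0 := (sum_exp_neg_mul_pos α (y + s • u)).ne'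
  have hcw : ∑ j, c s j * (-α * u j * exp (-α * (y + s • u) j))
      = -α * ∑ j, u j * c s j * exp (-α * (y + s • u) j) := by
    rw [mul_sum]; exact sum_congr rfl fun j _ => by ring
  have huw : ∑ j, -α * u j * exp (-α * (y + s • u) j)
      = -α * ∑ j, u j * exp (-α * (y + s • u) j) := by
    rw [mul_sum]; exact sum_congr rfl fun j _ => by ring
  refine (hN.div hS hS0).congr_deriv ?_
  simp only [gibbsCov, gibbsAvg, Pi.mul_apply, sum_add_distrib, hcw, huw]
  field_simp
  ring

theorem hasDerivAt_gibbsAvg_self_line [Nonempty ι] (α : ℝ) (y u : ι → ℝ) (s : ℝ) :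
    HasDerivAt (fun s => gibbsAvg α (y + s • u) (y + s • u))
      (gibbsAvg α (y + s • u) u - α * gibbsCov α (y + s • u) u (y + s • u)) s :=
  hasDerivAt_gibbsAvg_line α y u fun j => by
    simpa using ((hasDerivAt_id s).mul_const (u j)).const_add (y j)

theorem hasDerivAt_gibbsAvg_sub_mul_gibbsCov_line [Nonempty ι] (α : ℝ) (y u : ι → ℝ) (s : ℝ) :
    HasDerivAt (fun s => gibbsAvg α (y + s • u) u - α * gibbsCov α (y + s • u) u (y + s • u))
      (-α * gibbsAvg α (y + s • u) (fun j => (u j - gibbsAvg α (y + s • u) u) ^ 2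
        * (2 - α * ((y + s • u) j - gibbsAvg α (y + s • u) (y + s • u))))) s := by
  have hu := hasDerivAt_gibbsAvg_line α y u (c := fun _ => u) (c' := 0) (s := s)
    fun j => hasDerivAt_const s (u j)
  have huz := hasDerivAt_gibbsAvg_line α y u (c := fun s => u * (y + s • u)) (c' := u * u)
    (s := s) fun j => by
      simpa using (((hasDerivAt_id s).mul_const (u j)).const_add (y j)).const_mul (u j)
  have hz := hasDerivAt_gibbsAvg_self_line α y u s
  simp only [gibbsCov] at hu huz hz ⊢
  refine (hu.sub ((huz.sub (hu.mul hz)).const_mul α)).congr_deriv ?_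
  rw [gibbsAvg_sub_sq_mul_two_sub_eq, gibbsAvg_zero]
  simp only [gibbsCov]
  ring

theorem gibbsAvg_sub_sq_mul_two_sub_nonneg {α : ℝ} (hα : 0 ≤ α) {z : ι → ℝ}
    (hz : ∀ i, 0 ≤ z i ∧ α * z i ≤ 2) (u : ι → ℝ) :
    0 ≤ gibbsAvg α z (fun j => (u j - gibbsAvg α z u) ^ 2
      * (2 - α * (z j - gibbsAvg α z z))) := by
  have hmean : 0 ≤ α * gibbsAvg α z z := mul_nonneg hα (gibbsAvg_nonneg α z fun i => (hz i).1)
  refine gibbsAvg_nonneg α z fun j => mul_nonneg (sq_nonneg _) ?_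
  linarith [(hz j).2]

theorem concaveOn_gibbsAvg_self [Nonempty ι] {α : ℝ} (hα : 0 ≤ α) :
    ConcaveOn ℝ {x : ι → ℝ | ∀ i, 0 ≤ x i ∧ α * x i ≤ 2} (fun x => gibbsAvg α x x) := by
  refine ⟨convex_setOf_nonneg_mul_le α 2, fun x hx y hy a b ha hb hab => ?_⟩
  have hline : ∀ s : ℝ, y + s • (x - y) = s • x + (1 - s) • y := fun s => by
    ext i; simp only [Pi.add_apply, Pi.smul_apply, Pi.sub_apply, smul_eq_mul]; ring
  have hconc : ConcaveOn ℝ (Set.Icc 0 1)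
      (fun s : ℝ => gibbsAvg α (y + s • (x - y)) (y + s • (x - y))) := by
    refine concaveOn_of_hasDerivWithinAt2_nonpos (convex_Icc 0 1)
      (fun s _ => (hasDerivAt_gibbsAvg_self_line α y (x - y) s).continuousAt.continuousWithinAt)
      (fun s _ => (hasDerivAt_gibbsAvg_self_line α y (x - y) s).hasDerivWithinAt)
      (fun s _ => (hasDerivAt_gibbsAvg_sub_mul_gibbsCov_line α y (x - y) s).hasDerivWithinAt)
      fun s hs => ?_
    rw [interior_Icc] at hs
    have hmem := convex_setOf_nonneg_mul_le α 2 hx hy hs.1.le (sub_nonneg.2 hs.2.le) (by ring)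
    rw [← hline] at hmem
    exact mul_nonpos_of_nonpos_of_nonneg (neg_nonpos.2 hα)
      (gibbsAvg_sub_sq_mul_two_sub_nonneg hα hmem _)
  have h := hconc.2 (Set.right_mem_Icc.2 zero_le_one) (Set.left_mem_Icc.2 zero_le_one) ha hb hab
  obtain rfl : b = 1 - a := by linarith
  simpa [hline] using h

/-- Lemma 1 (concavity part): for `K ≥ 1`, `α ≥ 0`, the function
`H_α(x) = (∑ j, x_j e^{-α x_j}) / (∑ i, e^{-α x_i})` is concave on
`D = {x : ∀ i, 0 < x_i ∧ α x_i ≤ 1}`. -/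
theorem stmt_0 (K : ℕ) (hK : 1 ≤ K) (α : ℝ) (hα : 0 ≤ α)
    (x y : Fin K → ℝ)
    (hx : ∀ i, 0 < x i ∧ α * x i ≤ 1)
    (hy : ∀ i, 0 < y i ∧ α * y i ≤ 1)
    (t : ℝ) (ht0 : 0 ≤ t) (ht1 : t ≤ 1) :
    t * ((∑ j, x j * Real.exp (-α * x j)) / (∑ i, Real.exp (-α * x i)))
      + (1 - t) * ((∑ j, y j * Real.exp (-α * y j)) / (∑ i, Real.exp (-α * y i)))
    ≤ (∑ j, (t * x j + (1 - t) * y j) * Real.exp (-α * (t * x j + (1 - t) * y j)))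
        / (∑ i, Real.exp (-α * (t * x i + (1 - t) * y i))) := by
  have : Nonempty (Fin K) := ⟨⟨0, hK⟩⟩
  have hD : ∀ v : Fin K → ℝ, (∀ i, 0 < v i ∧ α * v i ≤ 1) → ∀ i, 0 ≤ v i ∧ α * v i ≤ 2 :=
    fun v hv i => ⟨(hv i).1.le, by linarith [(hv i).2]⟩
  exact (concaveOn_gibbsAvg_self hα).2 (hD x hx) (hD y hy) ht0 (sub_nonneg.2 ht1) (by ring)
end

section
/- Let K ≥ 1 and α ≥ 0, and for x ∈ ℝ^K with x_i > 0 for all i define H_α(x) = (∑_{j=1}^K x_j e^{-α x_j}) / (∑_{i=1}^K e^{-α x_i}). Then H_α is non-decreasing on D = {x ∈ ℝ^K : x_i > 0 and α x_i ≤ 1 for all i}: if x, y ∈ D and x_i ≤ y_i for every i ∈ {1,…,K}, then H_α(x) ≤ H_α(y). -/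
/-- Monotonicity of `t ↦ t * exp (-α t)` on `{t : 0 < t, α t ≤ 1}`. -/
lemma aux_mono (α a b : ℝ) (hα : 0 ≤ α) (ha : 0 < a) (hb1 : α * b ≤ 1)
    (hab : a ≤ b) : a * Real.exp (-α * a) ≤ b * Real.exp (-α * b) := by
  have hb : 0 < b := lt_of_lt_of_le ha hab
  have h1 : α * (a - b) + 1 ≤ Real.exp (α * (a - b)) := Real.add_one_le_exp _
  have h2 : a ≤ b * (α * (a - b) + 1) := by nlinarith
  have h3 : a ≤ b * Real.exp (α * (a - b)) := by
    calc a ≤ b * (α * (a - b) + 1) := h2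
    _ ≤ b * Real.exp (α * (a - b)) := by
        exact mul_le_mul_of_nonneg_left h1 hb.le
  have hexp : Real.exp (-α * b) = Real.exp (α * (a - b)) * Real.exp (-α * a) := by
    rw [← Real.exp_add]; ring_nf
  rw [hexp, ← mul_assoc]
  exact mul_le_mul_of_nonneg_right h3 (Real.exp_pos _).le

/-- Lemma 1 (monotonicity part): for `K ≥ 1`, `α ≥ 0`, the function
`H_α(x) = (∑ j, x_j e^{-α x_j}) / (∑ i, e^{-α x_i})` is non-decreasing on
`D = {x : ∀ i, 0 < x_i ∧ α x_i ≤ 1}`. -/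
theorem stmt_1 (K : ℕ) (hK : 1 ≤ K) (α : ℝ) (hα : 0 ≤ α)
    (x y : Fin K → ℝ)
    (hx : ∀ i, 0 < x i ∧ α * x i ≤ 1)
    (hy : ∀ i, 0 < y i ∧ α * y i ≤ 1)
    (hxy : ∀ i, x i ≤ y i) :
    (∑ j, x j * Real.exp (-α * x j)) / (∑ i, Real.exp (-α * x i))
      ≤ (∑ j, y j * Real.exp (-α * y j)) / (∑ i, Real.exp (-α * y i)) := by
  have hne : (Finset.univ : Finset (Fin K)).Nonempty := by
    simpa [Finset.univ_nonempty_iff] using Fin.pos_iff_nonempty.mp hK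
  have hDx : 0 < ∑ i, Real.exp (-α * x i) :=
    Finset.sum_pos (fun i _ => Real.exp_pos _) hne
  have hDy : 0 < ∑ i, Real.exp (-α * y i) :=
    Finset.sum_pos (fun i _ => Real.exp_pos _) hne
  rw [div_le_div_iff₀ hDx hDy]
  have hN : (∑ j, x j * Real.exp (-α * x j)) ≤ ∑ j, y j * Real.exp (-α * y j) :=
    Finset.sum_le_sum fun j _ => aux_mono α (x j) (y j) hα (hx j).1 (hy j).2 (hxy j)
  have hD : (∑ i, Real.exp (-α * y i)) ≤ ∑ i, Real.exp (-α * x i) :=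
    Finset.sum_le_sum fun i _ => Real.exp_le_exp.mpr (by nlinarith [hxy i])
  have hN0 : 0 ≤ ∑ j, x j * Real.exp (-α * x j) :=
    Finset.sum_nonneg fun j _ => mul_nonneg (hx j).1.le (Real.exp_pos _).le
  calc (∑ j, x j * Real.exp (-α * x j)) * ∑ i, Real.exp (-α * y i)
      ≤ (∑ j, y j * Real.exp (-α * y j)) * ∑ i, Real.exp (-α * y i) :=
        mul_le_mul_of_nonneg_right hN hDy.le
    _ ≤ (∑ j, y j * Real.exp (-α * y j)) * ∑ i, Real.exp (-α * x i) :=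
        mul_le_mul_of_nonneg_left hD (le_trans hN0 hN)
end

section
/- Let C₁ ≥ 0, C₂ ≥ 0, and γ̂ ≥ 0. The function g(u, v) = log₂(1 + (C₁ + C₂/u)·γ̂/v) is jointly convex on the set {(u, v) ∈ ℝ² : u > 0, v > 0}; that is, for all (u₁, v₁), (u₂, v₂) with u₁, u₂, v₁, v₂ > 0 and all t ∈ [0,1], g(t·u₁ + (1−t)·u₂, t·v₁ + (1−t)·v₂) ≤ t·g(u₁, v₁) + (1−t)·g(u₂, v₂). -/
/-!
Writing `1 + (C₁ + C₂/u)·γ̂/v = 1 + C₁γ̂ · v⁻¹ + C₂γ̂ · u⁻¹ · v⁻¹`, it suffices that this function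
is log-convex on the quadrant. The reciprocal is log-convex on `(0, ∞)` by weighted AM–GM, and
log-convexity survives linear pullbacks, products and, by Hölder's inequality, sums.
-/

open Real Set

theorem rpow_mul_rpow_add_rpow_mul_rpow_le {a b x₁ x₂ y₁ y₂ : ℝ} (ha : 0 ≤ a) (hb : 0 ≤ b)
    (hab : a + b = 1) (hx₁ : 0 ≤ x₁) (hx₂ : 0 ≤ x₂) (hy₁ : 0 ≤ y₁) (hy₂ : 0 ≤ y₂) :
    x₁ ^ a * y₁ ^ b + x₂ ^ a * y₂ ^ b ≤ (x₁ + x₂) ^ a * (y₁ + y₂) ^ b := by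
  rcases ha.eq_or_lt with rfl | ha
  · simp [(zero_add b).symm.trans hab]
  rcases hb.eq_or_lt with rfl | hb
  · simp [(add_zero a).symm.trans hab]
  have := inner_le_Lp_mul_Lq_of_nonneg Finset.univ (HolderConjugate.inv_inv ha hb hab)
    (f := ![x₁ ^ a, x₂ ^ a]) (g := ![y₁ ^ b, y₂ ^ b])
    (by simp [Fin.forall_fin_two, rpow_nonneg, *]) (by simp [Fin.forall_fin_two, rpow_nonneg, *])
  simpa [rpow_rpow_inv, hx₁, hx₂, hy₁, hy₂, ha.ne', hb.ne'] using this

/-- Log-convexity in multiplicative form, which also makes sense for functions with zeros: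
`f ≥ 0` on `s` and `log ∘ f : E → [-∞, ∞)` is convex. -/
def LogConvexOn {E : Type*} [AddCommMonoid E] [Module ℝ E] (s : Set E) (f : E → ℝ) : Prop :=
  Convex ℝ s ∧ (∀ x ∈ s, 0 ≤ f x) ∧
    ∀ ⦃x⦄, x ∈ s → ∀ ⦃y⦄, y ∈ s → ∀ ⦃a b : ℝ⦄, 0 ≤ a → 0 ≤ b → a + b = 1 →
      f (a • x + b • y) ≤ f x ^ a * f y ^ b

namespace LogConvexOn

variable {E F : Type*} [AddCommMonoid E] [Module ℝ E] [AddCommMonoid F] [Module ℝ F]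
  {s t : Set E} {f g : E → ℝ}

theorem nonneg (hf : LogConvexOn s f) {x : E} (hx : x ∈ s) : 0 ≤ f x := hf.2.1 x hx

theorem const (hs : Convex ℝ s) {c : ℝ} (hc : 0 ≤ c) : LogConvexOn s fun _ => c := by
  refine ⟨hs, fun _ _ => hc, fun _ _ _ _ a b _ _ hab => ?_⟩
  rw [← rpow_add' hc (by simp [hab]), hab, rpow_one]

theorem subset (hf : LogConvexOn t f) (hst : s ⊆ t) (hs : Convex ℝ s) : LogConvexOn s f :=
  ⟨hs, fun _ hx => hf.nonneg (hst hx), fun _ hx _ hy _ _ ha hb hab =>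
    hf.2.2 (hst hx) (hst hy) ha hb hab⟩

theorem comp_linearMap {f : F → ℝ} {s : Set F} (hf : LogConvexOn s f) (L : E →ₗ[ℝ] F) :
    LogConvexOn (L ⁻¹' s) (f ∘ L) :=
  ⟨hf.1.linear_preimage L, fun _ hx => hf.nonneg hx, fun x hx y hy a b ha hb hab => by
    simpa only [Function.comp_apply, map_add, map_smul] using hf.2.2 hx hy ha hb hab⟩

theorem add (hf : LogConvexOn s f) (hg : LogConvexOn s g) : LogConvexOn s (f + g) :=
  ⟨hf.1, fun _ hx => add_nonneg (hf.nonneg hx) (hg.nonneg hx), fun x hx y hy a b ha hb hab =>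
    calc f (a • x + b • y) + g (a • x + b • y)
        ≤ f x ^ a * f y ^ b + g x ^ a * g y ^ b :=
          add_le_add (hf.2.2 hx hy ha hb hab) (hg.2.2 hx hy ha hb hab)
      _ ≤ (f x + g x) ^ a * (f y + g y) ^ b :=
          rpow_mul_rpow_add_rpow_mul_rpow_le ha hb hab (hf.nonneg hx) (hg.nonneg hx)
            (hf.nonneg hy) (hg.nonneg hy)⟩

theorem mul (hf : LogConvexOn s f) (hg : LogConvexOn s g) : LogConvexOn s (f * g) :=
  ⟨hf.1, fun _ hx => mul_nonneg (hf.nonneg hx) (hg.nonneg hx), fun x hx y hy a b ha hb hab =>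
    calc f (a • x + b • y) * g (a • x + b • y)
        ≤ (f x ^ a * f y ^ b) * (g x ^ a * g y ^ b) :=
          mul_le_mul (hf.2.2 hx hy ha hb hab) (hg.2.2 hx hy ha hb hab)
            (hg.nonneg (hf.1 hx hy ha hb hab))
            (mul_nonneg (rpow_nonneg (hf.nonneg hx) a) (rpow_nonneg (hf.nonneg hy) b))
      _ = (f x * g x) ^ a * (f y * g y) ^ b := by
          rw [mul_rpow (hf.nonneg hx) (hg.nonneg hx), mul_rpow (hf.nonneg hy) (hg.nonneg hy)]
          ring⟩

theorem convexOn_log (hf : LogConvexOn s f) (hpos : ∀ x ∈ s, 0 < f x) :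
    ConvexOn ℝ s fun x => log (f x) :=
  ⟨hf.1, fun x hx y hy a b ha hb hab => by
    have hfx := hpos x hx
    have hfy := hpos y hy
    calc log (f (a • x + b • y)) ≤ log (f x ^ a * f y ^ b) :=
          log_le_log (hpos _ (hf.1 hx hy ha hb hab)) (hf.2.2 hx hy ha hb hab)
      _ = a • log (f x) + b • log (f y) := by
          rw [log_mul (by positivity) (by positivity), log_rpow hfx, log_rpow hfy, smul_eq_mul,
            smul_eq_mul]⟩

theorem convexOn_logb (hf : LogConvexOn s f) (hpos : ∀ x ∈ s, 0 < f x) {b : ℝ} (hb : 1 < b) :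
    ConvexOn ℝ s fun x => logb b (f x) := by
  refine ((hf.convexOn_log hpos).smul (inv_nonneg.2 (log_nonneg hb.le))).congr fun x _ => ?_
  simp only [smul_eq_mul, logb, div_eq_inv_mul]

end LogConvexOn

theorem logConvexOn_inv : LogConvexOn (Ioi 0) fun x : ℝ => x⁻¹ :=
  ⟨convex_Ioi 0, fun _ hx => inv_nonneg.2 (le_of_lt hx), fun x hx y hy a b ha hb hab => by
    rw [mem_Ioi] at hx hy
    rw [inv_rpow hx.le, inv_rpow hy.le, ← mul_inv, smul_eq_mul, smul_eq_mul]
    exact inv_anti₀ (by positivity)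
      (geom_mean_le_arith_mean2_weighted ha hb hx.le hy.le hab)⟩

theorem logConvexOn_one_add_snr {C₁ C₂ γ' : ℝ} (hC₁ : 0 ≤ C₁) (hC₂ : 0 ≤ C₂) (hγ : 0 ≤ γ') :
    LogConvexOn (Ioi 0 ×ˢ Ioi 0) fun p : ℝ × ℝ => 1 + (C₁ + C₂ / p.1) * γ' / p.2 := by
  have hS : Convex ℝ (Ioi (0 : ℝ) ×ˢ Ioi (0 : ℝ)) := (convex_Ioi 0).prod (convex_Ioi 0)
  have hu : LogConvexOn (Ioi 0 ×ˢ Ioi 0) fun p : ℝ × ℝ => p.1⁻¹ :=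
    (logConvexOn_inv.comp_linearMap (LinearMap.fst ℝ ℝ ℝ)).subset (fun _ hp => hp.1) hS
  have hv : LogConvexOn (Ioi 0 ×ˢ Ioi 0) fun p : ℝ × ℝ => p.2⁻¹ :=
    (logConvexOn_inv.comp_linearMap (LinearMap.snd ℝ ℝ ℝ)).subset (fun _ hp => hp.2) hS
  convert ((LogConvexOn.const hS zero_le_one).add
    ((LogConvexOn.const hS (mul_nonneg hC₁ hγ)).mul hv)).add
    ((LogConvexOn.const hS (mul_nonneg hC₂ hγ)).mul (hu.mul hv)) using 1
  ext p
  simp only [Pi.add_apply, Pi.mul_apply]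
  ring

/-- Joint convexity on the positive quadrant of
`g(u, v) = log₂(1 + (C₁ + C₂/u) · γ̂ / v)` for nonnegative constants. -/
theorem stmt_8 (C₁ C₂ γ' : ℝ) (hC₁ : 0 ≤ C₁) (hC₂ : 0 ≤ C₂) (hγ : 0 ≤ γ')
    (u₁ v₁ u₂ v₂ : ℝ) (hu₁ : 0 < u₁) (hv₁ : 0 < v₁) (hu₂ : 0 < u₂) (hv₂ : 0 < v₂)
    (t : ℝ) (ht0 : 0 ≤ t) (ht1 : t ≤ 1) :
    Real.logb 2 (1 + (C₁ + C₂ / (t * u₁ + (1 - t) * u₂)) * γ' / (t * v₁ + (1 - t) * v₂))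
    ≤ t * Real.logb 2 (1 + (C₁ + C₂ / u₁) * γ' / v₁)
      + (1 - t) * Real.logb 2 (1 + (C₁ + C₂ / u₂) * γ' / v₂) := by
  have hpos : ∀ p ∈ Ioi (0 : ℝ) ×ˢ Ioi (0 : ℝ), 0 < 1 + (C₁ + C₂ / p.1) * γ' / p.2 :=
    fun p ⟨hu, hv⟩ => by rw [mem_Ioi] at hu hv; positivity
  have hconv := (logConvexOn_one_add_snr hC₁ hC₂ hγ).convexOn_logb hpos one_lt_two
  simpa only [Prod.smul_mk, Prod.mk_add_mk, smul_eq_mul] using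
    hconv.2 (x := (u₁, v₁)) ⟨hu₁, hv₁⟩ (y := (u₂, v₂)) ⟨hu₂, hv₂⟩ ht0 (sub_nonneg.2 ht1)
      (add_sub_cancel t 1)
end

section
/- Let b ≥ 0, C₁ ≥ 0, C₂ ≥ 0, γ̂ ≥ 0, and let u, u₀, v, v₀ > 0. Define R(u, v) = b·log₂(1 + (C₁ + C₂/u)·γ̂/v), and set ψ = b·C₂·γ̂·log₂(e) / [u₀·(u₀·v₀ + (C₁·u₀ + C₂)·γ̂)] and φ = b·(C₁·u₀ + C₂)·γ̂·log₂(e) / [v₀·(u₀·v₀ + (C₁·u₀ + C₂)·γ̂)]. Then R(u, v) ≥ R(u₀, v₀) − ψ·(u − u₀) − φ·(v − v₀). -/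
open Real Set

private lemma seg_pos {a b t : ℝ} (ha : 0 < a) (hb : 0 < b) (ht0 : 0 ≤ t) (ht1 : t ≤ 1) :
    0 < a + t * (b - a) := by
  nlinarith [mul_nonneg ht0 hb.le, mul_nonneg (sub_nonneg.2 ht1) ha.le]

private lemma amgm (X Y Z du dv : ℝ) (hX : 0 ≤ X) (hY : 0 ≤ Y) (hZ : Z ^ 2 ≤ X * Y) :
    0 ≤ du ^ 2 * X + dv ^ 2 * Y + 2 * du * dv * Z := by
  nlinarith [sq_nonneg (du ^ 2 * X - dv ^ 2 * Y), mul_nonneg (sq_nonneg du) hX,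
    mul_nonneg (sq_nonneg dv) hY, mul_nonneg (mul_nonneg (sq_nonneg du) (sq_nonneg dv))
      (sub_nonneg.2 hZ), sq_nonneg (du ^ 2 * X + dv ^ 2 * Y + 2 * du * dv * Z)]

private lemma Qnonneg (α β a b du dv : ℝ) (hα : 0 ≤ α) (hβ : 0 ≤ β)
    (ha : 0 < a) (hb : 0 < b) :
    0 ≤ du ^ 2 * (a * b + α * a + β) ^ 2 * b ^ 2
      + dv ^ 2 * (a * b + α * a + β) ^ 2 * a ^ 2
      + a ^ 2 * b ^ 2 *
          (2 * du * dv * (a * b + α * a + β) - (du * (b + α) + dv * a) ^ 2) := by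
  have hX : 0 ≤ b ^ 2 * β * (2 * a * b + 2 * α * a + β) := by positivity
  have hY : 0 ≤ a ^ 2 * ((α * a + β) * (2 * a * b + α * a + β)) := by positivity
  have e1 : 2 * (a * b) * β ≤ (α * a + β) * (2 * a * b + α * a + β) := by
    nlinarith [mul_nonneg (mul_nonneg hα ha.le) (mul_pos ha hb).le, sq_nonneg (α * a),
      mul_nonneg (mul_nonneg hα ha.le) hβ, sq_nonneg β]
  have l : 2 * (a * b) ≤ 2 * a * b + 2 * α * a + β := by
    nlinarith [mul_nonneg hα ha.le]
  have e2 : (2 * (a * b)) * (2 * (a * b) * β)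
      ≤ (2 * a * b + 2 * α * a + β) * ((α * a + β) * (2 * a * b + α * a + β)) :=
    mul_le_mul l e1 (by positivity) (by nlinarith [mul_nonneg hα ha.le, mul_pos ha hb])
  have e3 : β * (a ^ 2 * b ^ 2)
      ≤ (2 * a * b + 2 * α * a + β) * ((α * a + β) * (2 * a * b + α * a + β)) := by
    nlinarith [e2, mul_nonneg hβ (sq_nonneg (a * b))]
  have hZ2 : (β * a ^ 2 * b ^ 2) ^ 2
      ≤ (b ^ 2 * β * (2 * a * b + 2 * α * a + β))
        * (a ^ 2 * ((α * a + β) * (2 * a * b + α * a + β))) := by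
    have w : 0 ≤ β * (a ^ 2 * b ^ 2) := by positivity
    have := mul_le_mul_of_nonneg_left e3 w
    nlinarith [this]
  have h := amgm _ _ _ du dv hX hY hZ2
  nlinarith [h]

/-- Core tangent-plane lower bound for `g(u,v) = log(uv + αu + β) - log u - log v`. -/
private lemma key (α β : ℝ) (hα : 0 ≤ α) (hβ : 0 ≤ β)
    (u u₀ v v₀ : ℝ) (hu : 0 < u) (hu₀ : 0 < u₀) (hv : 0 < v) (hv₀ : 0 < v₀) :
    Real.log (u₀ * v₀ + α * u₀ + β) - Real.log u₀ - Real.log v₀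
      - β / (u₀ * (u₀ * v₀ + α * u₀ + β)) * (u - u₀)
      - (α * u₀ + β) / (v₀ * (u₀ * v₀ + α * u₀ + β)) * (v - v₀)
    ≤ Real.log (u * v + α * u + β) - Real.log u - Real.log v := by
  obtain ⟨du, hdu⟩ : ∃ du, du = u - u₀ := ⟨_, rfl⟩
  obtain ⟨dv, hdv⟩ : ∃ dv, dv = v - v₀ := ⟨_, rfl⟩
  obtain ⟨L1, hL1⟩ : ∃ L1 : ℝ → ℝ, L1 = fun t => u₀ + t * du := ⟨_, rfl⟩
  obtain ⟨L2, hL2⟩ : ∃ L2 : ℝ → ℝ, L2 = fun t => v₀ + t * dv := ⟨_, rfl⟩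
  obtain ⟨P, hP⟩ : ∃ P : ℝ → ℝ, P = fun t => L1 t * L2 t + α * L1 t + β := ⟨_, rfl⟩
  obtain ⟨Q, hQ⟩ : ∃ Q : ℝ → ℝ, Q = fun t => du * (L2 t + α) + dv * L1 t := ⟨_, rfl⟩
  obtain ⟨h, hh⟩ : ∃ h : ℝ → ℝ,
      h = fun t => Real.log (P t) - Real.log (L1 t) - Real.log (L2 t) := ⟨_, rfl⟩
  obtain ⟨h1, hh1⟩ : ∃ h1 : ℝ → ℝ,
      h1 = fun t => Q t / P t - du / L1 t - dv / L2 t := ⟨_, rfl⟩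
  obtain ⟨h2, hh2⟩ : ∃ h2 : ℝ → ℝ, h2 = fun t =>
      (2 * du * dv * P t - Q t ^ 2) / (P t) ^ 2 + du ^ 2 / (L1 t) ^ 2 + dv ^ 2 / (L2 t) ^ 2 :=
    ⟨_, rfl⟩
  have hL1pos : ∀ t ∈ Icc (0:ℝ) 1, 0 < L1 t := fun t ht => by
    simp only [hL1, hdu]; exact seg_pos hu₀ hu ht.1 ht.2
  have hL2pos : ∀ t ∈ Icc (0:ℝ) 1, 0 < L2 t := fun t ht => by
    simp only [hL2, hdv]; exact seg_pos hv₀ hv ht.1 ht.2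
  have hPpos : ∀ t ∈ Icc (0:ℝ) 1, 0 < P t := fun t ht => by
    have ha := hL1pos t ht; have hb := hL2pos t ht
    simp only [hP]
    nlinarith [mul_pos ha hb, mul_nonneg hα ha.le]
  -- derivative facts
  have hderL1 : ∀ t : ℝ, HasDerivAt L1 du t := fun t => by
    rw [hL1]
    have H : HasDerivAt (fun x : ℝ => u₀ + x * du) (1 * du) t :=
      ((hasDerivAt_id t).mul_const du).const_add u₀
    rwa [one_mul] at H
  have hderL2 : ∀ t : ℝ, HasDerivAt L2 dv t := fun t => by
    rw [hL2]
    have H : HasDerivAt (fun x : ℝ => v₀ + x * dv) (1 * dv) t :=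
      ((hasDerivAt_id t).mul_const dv).const_add v₀
    rwa [one_mul] at H
  have hderP : ∀ t : ℝ, HasDerivAt P (Q t) t := fun t => by
    rw [hP]
    have H := (((hderL1 t).mul (hderL2 t)).add ((hderL1 t).const_mul α)).add_const β
    have e : du * L2 t + L1 t * dv + α * du = Q t := by rw [hQ]; ring
    rwa [e] at H
  have hderh : ∀ t ∈ Icc (0:ℝ) 1, HasDerivAt h (h1 t) t := fun t ht => by
    rw [hh, hh1]
    have l1 := (hderL1 t).log (hL1pos t ht).ne'
    have l2 := (hderL2 t).log (hL2pos t ht).ne'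
    have lp := (hderP t).log (hPpos t ht).ne'
    exact (lp.sub l1).sub l2
  have hderh1 : ∀ t ∈ Icc (0:ℝ) 1, HasDerivAt h1 (h2 t) t := fun t ht => by
    rw [hh1, hh2]
    have hL1ne := (hL1pos t ht).ne'
    have hL2ne := (hL2pos t ht).ne'
    have hPne := (hPpos t ht).ne'
    have hderQ : HasDerivAt Q (2 * du * dv) t := by
      rw [hQ]
      have H := (((hderL2 t).add_const α).const_mul du).add ((hderL1 t).const_mul dv)
      have e : du * dv + dv * du = 2 * du * dv := by ring
      rwa [e] at H
    have d1 : HasDerivAt (fun s => Q s / P s)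
        ((2 * du * dv * P t - Q t * Q t) / (P t) ^ 2) t := hderQ.div (hderP t) hPne
    have d2 : HasDerivAt (fun s => du / L1 s) ((0 * L1 t - du * du) / (L1 t) ^ 2) t :=
      (hasDerivAt_const t du).div (hderL1 t) hL1ne
    have d3 : HasDerivAt (fun s => dv / L2 s) ((0 * L2 t - dv * dv) / (L2 t) ^ 2) t :=
      (hasDerivAt_const t dv).div (hderL2 t) hL2ne
    have H := (d1.sub d2).sub d3
    have e : (2 * du * dv * P t - Q t * Q t) / (P t) ^ 2
        - (0 * L1 t - du * du) / (L1 t) ^ 2 - (0 * L2 t - dv * dv) / (L2 t) ^ 2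
        = (2 * du * dv * P t - Q t ^ 2) / (P t) ^ 2
          + du ^ 2 / (L1 t) ^ 2 + dv ^ 2 / (L2 t) ^ 2 := by
      rw [zero_mul, zero_mul]
      ring
    rwa [e] at H
  -- second derivative nonnegative on Icc 0 1
  have hh2nonneg : ∀ t ∈ Icc (0:ℝ) 1, 0 ≤ h2 t := fun t ht => by
    have ha := hL1pos t ht
    have hb := hL2pos t ht
    have hp := hPpos t ht
    have hpa : P t = L1 t * L2 t + α * L1 t + β := by simp only [hP]
    have hqa : Q t = du * (L2 t + α) + dv * L1 t := by simp only [hQ]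
    have hQ' := Qnonneg α β (L1 t) (L2 t) du dv hα hβ ha hb
    rw [← hpa, ← hqa] at hQ'
    have heq : h2 t = (du ^ 2 * (P t) ^ 2 * (L2 t) ^ 2 + dv ^ 2 * (P t) ^ 2 * (L1 t) ^ 2
        + (L1 t) ^ 2 * (L2 t) ^ 2 * (2 * du * dv * P t - (Q t) ^ 2))
          / (P t * L1 t * L2 t) ^ 2 := by
      simp only [hh2]
      field_simp
      ring
    rw [heq]
    positivity
  -- h1 is monotone on Icc 0 1
  have hcont1 : ContinuousOn h1 (Icc 0 1) := fun t ht =>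
    (hderh1 t ht).continuousAt.continuousWithinAt
  have hmono : MonotoneOn h1 (Icc 0 1) := by
    apply monotoneOn_of_deriv_nonneg (convex_Icc 0 1) hcont1
    · intro t ht
      rw [interior_Icc] at ht
      exact (hderh1 t (Ioo_subset_Icc_self ht)).differentiableAt.differentiableWithinAt
    · intro t ht
      rw [interior_Icc] at ht
      rw [(hderh1 t (Ioo_subset_Icc_self ht)).deriv]
      exact hh2nonneg t (Ioo_subset_Icc_self ht)
  -- MVT
  have hconth : ContinuousOn h (Icc 0 1) := fun t ht =>
    (hderh t ht).continuousAt.continuousWithinAt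
  obtain ⟨c, hc, hceq⟩ := exists_hasDerivAt_eq_slope h h1 (by norm_num : (0:ℝ) < 1)
    hconth (fun t ht => hderh t (Ioo_subset_Icc_self ht))
  have hstep : h 0 + h1 0 ≤ h 1 := by
    have h10c : h1 0 ≤ h1 c :=
      hmono (left_mem_Icc.2 zero_le_one) (Ioo_subset_Icc_self hc) hc.1.le
    have : h1 c = h 1 - h 0 := by rw [hceq]; ring
    linarith
  -- translate endpoints
  have hD : 0 < u₀ * v₀ + α * u₀ + β := by
    nlinarith [mul_pos hu₀ hv₀, mul_nonneg hα hu₀.le]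
  have e01 : L1 0 = u₀ := by simp only [hL1]; ring
  have e02 : L2 0 = v₀ := by simp only [hL2]; ring
  have e11 : L1 1 = u := by simp only [hL1, hdu]; ring
  have e12 : L2 1 = v := by simp only [hL2, hdv]; ring
  have ep0 : P 0 = u₀ * v₀ + α * u₀ + β := by simp only [hP]; rw [e01, e02]
  have ep1 : P 1 = u * v + α * u + β := by simp only [hP]; rw [e11, e12]
  have hE0 : h 0 = Real.log (u₀ * v₀ + α * u₀ + β) - Real.log u₀ - Real.log v₀ := by
    simp only [hh]; rw [ep0, e01, e02]
  have hE1 : h 1 = Real.log (u * v + α * u + β) - Real.log u - Real.log v := by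
    simp only [hh]; rw [ep1, e11, e12]
  have hE1' : h1 0 = -(β / (u₀ * (u₀ * v₀ + α * u₀ + β)) * (u - u₀))
      - (α * u₀ + β) / (v₀ * (u₀ * v₀ + α * u₀ + β)) * (v - v₀) := by
    simp only [hh1]
    have hq0 : Q 0 = du * (v₀ + α) + dv * u₀ := by simp only [hQ]; rw [e01, e02]
    rw [hq0, ep0, e01, e02, hdu, hdv]
    field_simp
    ring
  rw [hE0, hE1, hE1'] at hstep
  linarith

/-- First-order Taylor lower bound of `R(u, v) = b·log₂(1 + (C₁ + C₂/u)·γ̂/v)`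
around `(u₀, v₀)`, used in the successive convex approximation. -/
theorem stmt_10 (b C₁ C₂ γ' : ℝ) (hb : 0 ≤ b) (hC₁ : 0 ≤ C₁) (hC₂ : 0 ≤ C₂)
    (hγ : 0 ≤ γ') (u u₀ v v₀ : ℝ) (hu : 0 < u) (hu₀ : 0 < u₀) (hv : 0 < v)
    (hv₀ : 0 < v₀)
    (ψ φ : ℝ)
    (hψ : ψ = b * C₂ * γ' * Real.logb 2 (Real.exp 1)
                / (u₀ * (u₀ * v₀ + (C₁ * u₀ + C₂) * γ')))
    (hφ : φ = b * (C₁ * u₀ + C₂) * γ' * Real.logb 2 (Real.exp 1)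
                / (v₀ * (u₀ * v₀ + (C₁ * u₀ + C₂) * γ'))) :
    b * Real.logb 2 (1 + (C₁ + C₂ / u₀) * γ' / v₀)
      - ψ * (u - u₀) - φ * (v - v₀)
    ≤ b * Real.logb 2 (1 + (C₁ + C₂ / u) * γ' / v) := by
  have hα : 0 ≤ C₁ * γ' := mul_nonneg hC₁ hγ
  have hβ : 0 ≤ C₂ * γ' := mul_nonneg hC₂ hγ
  set α := C₁ * γ' with hα'
  set β := C₂ * γ' with hβ'
  have hD : 0 < u₀ * v₀ + α * u₀ + β := by nlinarith [mul_pos hu₀ hv₀, mul_nonneg hα hu₀.le]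
  have hlog2 : 0 < Real.log 2 := Real.log_pos (by norm_num)
  have hlogb : ∀ (x y : ℝ), 0 < x → 0 < y →
      Real.logb 2 (1 + (C₁ + C₂ / x) * γ' / y)
        = (Real.log (x * y + α * x + β) - Real.log x - Real.log y) / Real.log 2 := by
    intro x y hx hy
    have hxy : 0 < x * y + α * x + β := by nlinarith [mul_pos hx hy, mul_nonneg hα hx.le]
    have harg : 1 + (C₁ + C₂ / x) * γ' / y = (x * y + α * x + β) / (x * y) := by
      rw [hα', hβ']
      field_simp
      ring
    rw [harg, Real.logb, Real.log_div hxy.ne' (mul_pos hx hy).ne',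
      Real.log_mul hx.ne' hy.ne']
    ring
  have hlogbe : Real.logb 2 (Real.exp 1) = 1 / Real.log 2 := by
    rw [Real.logb, Real.log_exp]
  have hkey := key α β hα hβ u u₀ v v₀ hu hu₀ hv hv₀
  have hc : 0 ≤ b / Real.log 2 := div_nonneg hb hlog2.le
  have hmul := mul_le_mul_of_nonneg_left hkey hc
  have hDrw : u₀ * v₀ + (C₁ * u₀ + C₂) * γ' = u₀ * v₀ + α * u₀ + β := by
    rw [hα', hβ']; ring
  rw [hlogb u v hu hv, hlogb u₀ v₀ hu₀ hv₀, hψ, hφ, hlogbe, hDrw]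
  have hψeq : b * C₂ * γ' * (1 / Real.log 2) / (u₀ * (u₀ * v₀ + α * u₀ + β))
      = (b / Real.log 2) * (β / (u₀ * (u₀ * v₀ + α * u₀ + β))) := by
    rw [hβ']
    field_simp
  have hφeq : b * (C₁ * u₀ + C₂) * γ' * (1 / Real.log 2)
        / (v₀ * (u₀ * v₀ + α * u₀ + β))
      = (b / Real.log 2) * ((α * u₀ + β) / (v₀ * (u₀ * v₀ + α * u₀ + β))) := by
    rw [hα', hβ']
    field_simp
  rw [hψeq, hφeq]
  calc b * ((Real.log (u₀ * v₀ + α * u₀ + β) - Real.log u₀ - Real.log v₀) / Real.log 2)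
        - b / Real.log 2 * (β / (u₀ * (u₀ * v₀ + α * u₀ + β))) * (u - u₀)
        - b / Real.log 2 * ((α * u₀ + β) / (v₀ * (u₀ * v₀ + α * u₀ + β))) * (v - v₀)
      = (b / Real.log 2) * (Real.log (u₀ * v₀ + α * u₀ + β) - Real.log u₀ - Real.log v₀
          - β / (u₀ * (u₀ * v₀ + α * u₀ + β)) * (u - u₀)
          - (α * u₀ + β) / (v₀ * (u₀ * v₀ + α * u₀ + β)) * (v - v₀)) := by ring
    _ ≤ (b / Real.log 2) * (Real.log (u * v + α * u + β) - Real.log u - Real.log v) := hmul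
    _ = b * ((Real.log (u * v + α * u + β) - Real.log u - Real.log v) / Real.log 2) := by ring
end

section
/- Let K ≥ 1, α ≥ 0, let C ⊆ ℝ^m be a convex set, and for each k ∈ {1,…,K} let f_k : C → ℝ be a concave function such that 0 < f_k(z) and α·f_k(z) ≤ 1 for all z ∈ C. Define H_α(x) = (∑_{j=1}^K x_j e^{-α x_j}) / (∑_{i=1}^K e^{-α x_i}) for x ∈ ℝ^K with all x_i > 0. Then the function z ↦ H_α(f_1(z), …, f_K(z)) is concave on C. -/
/-!
Restrict `H_α` to a line `t ↦ x + t • d`. With the Gibbs weights `p k ∝ exp (-α x k)` and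
`q k = p k (1 - α (x k - H_α x))`, one computes `H' = ∑ q d` and
`H'' = -α (∑ q d² + ∑ p d² - 2 (∑ p d) (∑ q d))`. On the box `0 < x k`, `α x k ≤ 1` both `p`
and `q` are probability vectors, so Jensen's inequality `(∑ p d)² ≤ ∑ p d²` (and likewise
for `q`) gives `H'' ≤ 0`, while `d ≥ 0` gives `H' ≥ 0`. Thus `H_α` is concave and monotone on
the box, and composing it with the concave `f k` preserves concavity.
-/

open Finset Real

section Composition

variable {𝕜 E β γ ι : Type*} [Semiring 𝕜] [PartialOrder 𝕜]
  [AddCommMonoid E] [AddCommMonoid β] [PartialOrder β] [AddCommMonoid γ] [PartialOrder γ]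
  [SMul 𝕜 E] [SMul 𝕜 β] [SMul 𝕜 γ]

theorem ConcaveOn.comp_of_mapsTo {s : Set E} {t : Set β} {f : E → β} {g : β → γ}
    (hg : ConcaveOn 𝕜 t g) (hg' : MonotoneOn g t) (hf : ConcaveOn 𝕜 s f) (hst : Set.MapsTo f s t) :
    ConcaveOn 𝕜 s (g ∘ f) :=
  ⟨hf.1, fun _ hx _ hy _ _ ha hb hab =>
    (hg.2 (hst hx) (hst hy) ha hb hab).trans <|
      hg' (hg.1 (hst hx) (hst hy) ha hb hab) (hst <| hf.1 hx hy ha hb hab)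
        (hf.2 hx hy ha hb hab)⟩

theorem concaveOn_pi {s : Set E} (hs : Convex 𝕜 s) {f : ι → E → β}
    (hf : ∀ i, ConcaveOn 𝕜 s (f i)) : ConcaveOn 𝕜 s (fun x i => f i x) :=
  ⟨hs, fun _ hx _ hy _ _ ha hb hab i => (hf i).2 hx hy ha hb hab⟩

end Composition

theorem concaveOn_of_forall_concaveOn_Icc {E : Type*} [AddCommGroup E] [Module ℝ E]
    {s : Set E} {f : E → ℝ} (hs : Convex ℝ s)
    (hf : ∀ x ∈ s, ∀ y ∈ s, ConcaveOn ℝ (Set.Icc 0 1) fun t : ℝ => f (x + t • (y - x))) :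
    ConcaveOn ℝ s f := by
  refine ⟨hs, fun x hx y hy a b ha hb hab => ?_⟩
  have h := (hf y hy x hx).2 (Set.right_mem_Icc.2 zero_le_one) (Set.left_mem_Icc.2 zero_le_one)
    ha hb hab
  obtain rfl : b = 1 - a := by linarith
  have e : y + a • (x - y) = a • x + (1 - a) • y := by
    simp only [smul_sub, sub_smul, one_smul]; abel
  simpa [e] using h

theorem two_mul_sum_mul_mul_sum_mul_le {ι : Type*} {s : Finset ι} {p q d : ι → ℝ}
    (hp : ∀ i ∈ s, 0 ≤ p i) (hq : ∀ i ∈ s, 0 ≤ q i)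
    (hp₁ : ∑ i ∈ s, p i = 1) (hq₁ : ∑ i ∈ s, q i = 1) :
    2 * (∑ i ∈ s, p i * d i) * (∑ i ∈ s, q i * d i) ≤
      ∑ i ∈ s, p i * d i ^ 2 + ∑ i ∈ s, q i * d i ^ 2 := by
  have hp₂ := (even_two.convexOn_pow (𝕜 := ℝ)).map_sum_le hp hp₁ fun i _ => Set.mem_univ (d i)
  have hq₂ := (even_two.convexOn_pow (𝕜 := ℝ)).map_sum_le hq hq₁ fun i _ => Set.mem_univ (d i)
  simp only [smul_eq_mul] at hp₂ hq₂
  nlinarith [sq_nonneg (∑ i ∈ s, p i * d i - ∑ i ∈ s, q i * d i)]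

section ExpMean

variable {ι : Type*}

def expMeanBox (α : ℝ) : Set (ι → ℝ) := {x | ∀ k, 0 < x k ∧ α * x k ≤ 1}

noncomputable def expWeight [Fintype ι] (α : ℝ) (x : ι → ℝ) (k : ι) : ℝ :=
  exp (-α * x k) / ∑ i, exp (-α * x i)

noncomputable def expMean [Fintype ι] (α : ℝ) (x : ι → ℝ) : ℝ :=
  (∑ j, x j * exp (-α * x j)) / ∑ i, exp (-α * x i)

noncomputable def expMeanGrad [Fintype ι] (α : ℝ) (x : ι → ℝ) (k : ι) : ℝ :=
  expWeight α x k * (1 - α * (x k - expMean α x))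

variable {α : ℝ}

theorem convex_expMeanBox : Convex ℝ (expMeanBox (ι := ι) α) := by
  intro x hx y hy a b ha hb hab k
  obtain ⟨hx₀, hx₁⟩ := hx k
  obtain ⟨hy₀, hy₁⟩ := hy k
  simp only [Pi.add_apply, Pi.smul_apply, smul_eq_mul]
  constructor
  · nlinarith [mul_le_mul_of_nonneg_left (min_le_left (x k) (y k)) ha,
      mul_le_mul_of_nonneg_left (min_le_right (x k) (y k)) hb, lt_min hx₀ hy₀]
  · nlinarith [mul_le_mul_of_nonneg_left hx₁ ha, mul_le_mul_of_nonneg_left hy₁ hb]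

theorem hasDerivAt_line_apply (x d : ι → ℝ) (t : ℝ) (k : ι) :
    HasDerivAt (fun t : ℝ => (x + t • d) k) (d k) t := by
  simpa using ((hasDerivAt_id t).mul_const (d k)).const_add (x k)

theorem hasDerivAt_exp_line (x d : ι → ℝ) (t : ℝ) (k : ι) :
    HasDerivAt (fun t : ℝ => exp (-α * (x + t • d) k)) (-α * d k * exp (-α * (x + t • d) k)) t :=
  (((hasDerivAt_line_apply x d t k).const_mul (-α)).exp).congr_deriv (by ring)

variable [Fintype ι]

theorem sum_exp_pos [Nonempty ι] (x : ι → ℝ) : 0 < ∑ i, exp (-α * x i) :=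
  sum_pos (fun _ _ => exp_pos _) univ_nonempty

theorem expWeight_nonneg (x : ι → ℝ) (k : ι) : 0 ≤ expWeight α x k :=
  div_nonneg (exp_pos _).le (sum_nonneg fun _ _ => (exp_pos _).le)

theorem sum_expWeight [Nonempty ι] (x : ι → ℝ) : ∑ k, expWeight α x k = 1 := by
  simp only [expWeight, ← sum_div, div_self (sum_exp_pos x).ne']

theorem expMean_eq_sum_expWeight_mul (x : ι → ℝ) : expMean α x = ∑ k, expWeight α x k * x k := by
  simp only [expMean, expWeight, sum_div]
  exact sum_congr rfl fun k _ => by ring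

theorem expMean_pos [Nonempty ι] {x : ι → ℝ} (hx : ∀ k, 0 < x k) : 0 < expMean α x :=
  div_pos (sum_pos (fun k _ => mul_pos (hx k) (exp_pos _)) univ_nonempty) (sum_exp_pos x)

theorem sum_expMeanGrad [Nonempty ι] (x : ι → ℝ) : ∑ k, expMeanGrad α x k = 1 := by
  have h : ∀ k, expMeanGrad α x k =
      expWeight α x k - α * (expWeight α x k * x k) + α * expMean α x * expWeight α x k :=
    fun k => by unfold expMeanGrad; ring
  simp only [h, sum_add_distrib, sum_sub_distrib, ← mul_sum, ← expMean_eq_sum_expWeight_mul,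
    sum_expWeight]
  ring

theorem expMeanGrad_nonneg (hα : 0 ≤ α) {x : ι → ℝ} (hx : x ∈ expMeanBox α) (k : ι) :
    0 ≤ expMeanGrad α x k := by
  have : Nonempty ι := ⟨k⟩
  have hH := expMean_pos (α := α) fun i => (hx i).1
  exact mul_nonneg (expWeight_nonneg x k) (by nlinarith [(hx k).2, mul_nonneg hα hH.le])

section Line

variable [Nonempty ι] (x d : ι → ℝ) (t : ℝ)

theorem hasDerivAt_expWeight_line (k : ι) :
    HasDerivAt (fun t : ℝ => expWeight α (x + t • d) k)
      (-α * expWeight α (x + t • d) k *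
        (d k - ∑ j, expWeight α (x + t • d) j * d j)) t := by
  have hZ := HasDerivAt.fun_sum fun i (_ : i ∈ univ) => hasDerivAt_exp_line (α := α) x d t i
  refine ((hasDerivAt_exp_line x d t k).div hZ (sum_exp_pos _).ne').congr_deriv ?_
  have hsum : ∑ i, -α * d i * exp (-α * (x + t • d) i) =
      -α * ∑ i, exp (-α * (x + t • d) i) * d i := by
    rw [mul_sum]; exact sum_congr rfl fun i _ => by ring
  simp only [expWeight, div_mul_eq_mul_div, ← sum_div, hsum]
  field_simp
  ring

theorem hasDerivAt_expMean_line :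
    HasDerivAt (fun t : ℝ => expMean α (x + t • d))
      (∑ k, expMeanGrad α (x + t • d) k * d k) t := by
  simp only [expMean_eq_sum_expWeight_mul]
  refine (HasDerivAt.fun_sum fun k (_ : k ∈ univ) =>
    (hasDerivAt_expWeight_line (α := α) x d t k).mul (hasDerivAt_line_apply x d t k)).congr_deriv ?_
  set y := x + t • d
  set p := expWeight α y
  have h : ∀ k, -α * p k * (d k - ∑ j, p j * d j) * y k + p k * d k =
      expMeanGrad α y k * d k + α * ((∑ j, p j * d j) * (p k * y k) - expMean α y * (p k * d k)) :=
    fun k => by unfold expMeanGrad; ring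
  have hH : ∑ k, p k * y k = expMean α y := (expMean_eq_sum_expWeight_mul y).symm
  simp only [h, sum_add_distrib, ← mul_sum, sum_sub_distrib, hH]
  ring

theorem hasDerivAt_expMeanGrad_line (k : ι) :
    HasDerivAt (fun t : ℝ => expMeanGrad α (x + t • d) k)
      (-α * (expMeanGrad α (x + t • d) k * (d k - ∑ j, expWeight α (x + t • d) j * d j) +
        expWeight α (x + t • d) k * (d k - ∑ j, expMeanGrad α (x + t • d) j * d j))) t := by
  have hg := (((hasDerivAt_line_apply x d t k).fun_sub
    (hasDerivAt_expMean_line (α := α) x d t)).const_mul α).const_sub 1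
  refine ((hasDerivAt_expWeight_line x d t k).mul hg).congr_deriv ?_
  unfold expMeanGrad
  ring

theorem hasDerivAt_sum_expMeanGrad_mul_line :
    HasDerivAt (fun t : ℝ => ∑ k, expMeanGrad α (x + t • d) k * d k)
      (-α * (∑ k, expMeanGrad α (x + t • d) k * d k ^ 2 + ∑ k, expWeight α (x + t • d) k * d k ^ 2
        - 2 * (∑ k, expWeight α (x + t • d) k * d k) *
          ∑ k, expMeanGrad α (x + t • d) k * d k)) t := by
  refine (HasDerivAt.fun_sum fun k (_ : k ∈ univ) =>
    (hasDerivAt_expMeanGrad_line (α := α) x d t k).mul_const (d k)).congr_deriv ?_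
  set q := expMeanGrad α (x + t • d)
  set p := expWeight α (x + t • d)
  have h : ∀ k, -α * (q k * (d k - ∑ j, p j * d j) + p k * (d k - ∑ j, q j * d j)) * d k =
      -α * (q k * d k ^ 2 + p k * d k ^ 2) + α * (∑ j, p j * d j) * (q k * d k)
        + α * (∑ j, q j * d j) * (p k * d k) :=
    fun k => by ring
  simp only [h, sum_add_distrib, ← mul_sum]
  ring

end Line

theorem concaveOn_expMean (hα : 0 ≤ α) : ConcaveOn ℝ (expMeanBox α) (expMean (ι := ι) α) := by
  rcases isEmpty_or_nonempty ι with hι | hι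
  · have h : expMean (ι := ι) α = fun _ => 0 := funext fun x => by simp [expMean]
    exact h ▸ concaveOn_const 0 convex_expMeanBox
  refine concaveOn_of_forall_concaveOn_Icc convex_expMeanBox fun x hx y hy => ?_
  refine concaveOn_of_hasDerivWithinAt2_nonpos (convex_Icc 0 1)
    (fun t _ => (hasDerivAt_expMean_line x (y - x) t).continuousAt.continuousWithinAt)
    (fun t _ => (hasDerivAt_expMean_line x (y - x) t).hasDerivWithinAt)
    (fun t _ => (hasDerivAt_sum_expMeanGrad_mul_line x (y - x) t).hasDerivWithinAt) fun t ht => ?_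
  have hxt := convex_expMeanBox.add_smul_sub_mem hx hy (interior_subset ht)
  have h := two_mul_sum_mul_mul_sum_mul_le (d := y - x)
    (fun k _ => expWeight_nonneg (α := α) (x + t • (y - x)) k)
    (fun k _ => expMeanGrad_nonneg hα hxt k) (sum_expWeight _) (sum_expMeanGrad _)
  nlinarith [mul_nonneg hα (sub_nonneg.2 h)]

theorem monotoneOn_expMean (hα : 0 ≤ α) : MonotoneOn (expMean (ι := ι) α) (expMeanBox α) := by
  intro x hx y hy hxy
  rcases isEmpty_or_nonempty ι with hι | hι
  · exact (congrArg _ (Subsingleton.elim x y)).le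
  have h : MonotoneOn (fun t : ℝ => expMean α (x + t • (y - x))) (Set.Icc 0 1) :=
    monotoneOn_of_hasDerivWithinAt_nonneg (convex_Icc 0 1)
      (fun t _ => (hasDerivAt_expMean_line x (y - x) t).continuousAt.continuousWithinAt)
      (fun t _ => (hasDerivAt_expMean_line x (y - x) t).hasDerivWithinAt) fun t ht =>
        sum_nonneg fun k _ => mul_nonneg
          (expMeanGrad_nonneg hα (convex_expMeanBox.add_smul_sub_mem hx hy (interior_subset ht)) k)
          (sub_nonneg.2 (hxy k))
  simpa using h (Set.left_mem_Icc.2 zero_le_one) (Set.right_mem_Icc.2 zero_le_one) zero_le_one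

end ExpMean

theorem stmt_11_general (K : ℕ) (α : ℝ) (hα : 0 ≤ α)
    (m : ℕ) (C : Set (Fin m → ℝ)) (hC : Convex ℝ C)
    (f : Fin K → (Fin m → ℝ) → ℝ)
    (hconc : ∀ k, ConcaveOn ℝ C (f k))
    (hpos : ∀ k, ∀ z ∈ C, 0 < f k z)
    (hle : ∀ k, ∀ z ∈ C, α * f k z ≤ 1) :
    ConcaveOn ℝ C (fun z =>
      (∑ j, f j z * Real.exp (-α * f j z)) / (∑ i, Real.exp (-α * f i z))) :=
  (concaveOn_expMean hα).comp_of_mapsTo (monotoneOn_expMean hα) (concaveOn_pi hC hconc)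
    fun z hz k => ⟨hpos k z hz, hle k z hz⟩

/-- Composition rule: if each `f_k` is concave on a convex set `C` with
`0 < f_k(z)` and `α f_k(z) ≤ 1` on `C`, then `z ↦ H_α(f_1(z), …, f_K(z))` is
concave on `C`, where
`H_α(x) = (∑ j, x_j e^{-α x_j}) / (∑ i, e^{-α x_i})`. -/
theorem stmt_11 (K : ℕ) (hK : 1 ≤ K) (α : ℝ) (hα : 0 ≤ α)
    (m : ℕ) (C : Set (Fin m → ℝ)) (hC : Convex ℝ C)
    (f : Fin K → (Fin m → ℝ) → ℝ)
    (hconc : ∀ k, ConcaveOn ℝ C (f k))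
    (hpos : ∀ k, ∀ z ∈ C, 0 < f k z)
    (hle : ∀ k, ∀ z ∈ C, α * f k z ≤ 1) :
    ConcaveOn ℝ C (fun z =>
      (∑ j, f j z * Real.exp (-α * f j z)) / (∑ i, Real.exp (-α * f i z))) :=
  stmt_11_general K α hα m C hC f hconc hpos hle
end
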